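/- Let G be the spider graph with vertex set {x} ∪ {y_1,…,y_n} ∪ {z_1,…,z_n} and edges {x y_i, y_i z_i} for 1 ≤ i ≤ n, with n ≥ 2. Then the domination number γ(G) = n while the ve-domination number γ_ve(G) = 1. In particular, the ratio γ(G)/γ_ve(G) tends to infinity as n → ∞. -/

import Mathlib

/-!
The centre `x` alone is a ve-dominating set, because every edge of the spider contains some
`y_i`, a neighbour of `x`. On the other hand the closed neighbourhoods `N[z_i] = {y_i, z_i}` of
the leaves are pairwise disjoint and each of them must meet every dominating set, so
`γ ≥ n`; the middle vertices `y_1, …, y_n` form a dominating set of that size.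
-/

/-- The closed neighborhood `N[D]` of a vertex set `D` in a simple graph `G`. -/
def closedNbhd {V : Type*} (G : SimpleGraph V) (D : Set V) : Set V :=
  D ∪ {v | ∃ d ∈ D, G.Adj d v}

/-- `D` is a vertex-edge dominating set. -/
def IsVeDomSet {V : Type*} (G : SimpleGraph V) (D : Set V) : Prop :=
  ∀ u v : V, G.Adj u v →
    ∃ w ∈ D, u ∈ closedNbhd G {w} ∨ v ∈ closedNbhd G {w}

/-- `D` is a dominating set: every vertex not in `D` has a neighbor in `D`. -/
def IsDomSet {V : Type*} (G : SimpleGraph V) (D : Set V) : Prop :=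
  ∀ v : V, v ∉ D → ∃ d ∈ D, G.Adj d v

/-- The ve-domination number `γ_ve(G)`. -/
noncomputable def veDomNum {V : Type*} (G : SimpleGraph V) : ℕ :=
  sInf {n : ℕ | ∃ D : Set V, IsVeDomSet G D ∧ D.ncard = n}

/-- The domination number `γ(G)`. -/
noncomputable def domNum {V : Type*} (G : SimpleGraph V) : ℕ :=
  sInf {n : ℕ | ∃ D : Set V, IsDomSet G D ∧ D.ncard = n}

/-- Vertex type of the spider graph: center `x = Sum.inl ()`,
middle vertices `y_i = Sum.inr (Sum.inl i)`, leaves `z_i = Sum.inr (Sum.inr i)`. -/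
abbrev SpiderV (n : ℕ) : Type := Unit ⊕ (Fin n ⊕ Fin n)

/-- The spider graph with edges `x y_i` and `y_i z_i` for `1 ≤ i ≤ n`. -/
def spider (n : ℕ) : SimpleGraph (SpiderV n) :=
  SimpleGraph.fromRel (fun a b =>
    (∃ i : Fin n, a = Sum.inl () ∧ b = Sum.inr (Sum.inl i)) ∨
    (∃ i : Fin n, a = Sum.inr (Sum.inl i) ∧ b = Sum.inr (Sum.inr i)))

open Function

section Domination

variable {V : Type*} {G : SimpleGraph V} {D : Set V}

theorem mem_closedNbhd_singleton {v w : V} : v ∈ closedNbhd G {w} ↔ v = w ∨ G.Adj w v := by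
  simp [closedNbhd]

theorem isDomSet_univ (G : SimpleGraph V) : IsDomSet G Set.univ :=
  fun _ hv => absurd trivial hv

theorem isVeDomSet_univ (G : SimpleGraph V) : IsVeDomSet G Set.univ :=
  fun u _ _ => ⟨u, trivial, Or.inl (Or.inl rfl)⟩

theorem IsDomSet.domNum_le (hD : IsDomSet G D) : domNum G ≤ D.ncard :=
  Nat.sInf_le ⟨D, hD, rfl⟩

theorem IsVeDomSet.veDomNum_le (hD : IsVeDomSet G D) : veDomNum G ≤ D.ncard :=
  Nat.sInf_le ⟨D, hD, rfl⟩

theorem le_domNum {k : ℕ} (h : ∀ D, IsDomSet G D → k ≤ D.ncard) : k ≤ domNum G :=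
  le_csInf ⟨_, _, isDomSet_univ G, rfl⟩ (by rintro _ ⟨D, hD, rfl⟩; exact h D hD)

theorem le_veDomNum {k : ℕ} (h : ∀ D, IsVeDomSet G D → k ≤ D.ncard) : k ≤ veDomNum G :=
  le_csInf ⟨_, _, isVeDomSet_univ G, rfl⟩ (by rintro _ ⟨D, hD, rfl⟩; exact h D hD)

theorem IsDomSet.inter_closedNbhd_nonempty (hD : IsDomSet G D) (v : V) :
    (D ∩ closedNbhd G {v}).Nonempty := by
  by_cases hv : v ∈ D
  · exact ⟨v, hv, Or.inl rfl⟩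
  · obtain ⟨d, hd, hdv⟩ := hD v hv
    exact ⟨d, hd, mem_closedNbhd_singleton.2 (Or.inr hdv.symm)⟩

theorem IsDomSet.card_le_ncard_of_pairwiseDisjoint [Finite V] {ι : Type*} {f : ι → V}
    (hf : Pairwise (Disjoint on fun i => closedNbhd G {f i})) (hD : IsDomSet G D) :
    Nat.card ι ≤ D.ncard := by
  choose g hgD hgN using fun i => hD.inter_closedNbhd_nonempty (f i)
  have hg : Injective g := fun i j hij =>
    hf.eq (Set.not_disjoint_iff.2 ⟨g i, hgN i, hij ▸ hgN j⟩)
  rw [← Nat.card_coe_set_eq]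
  exact Nat.card_le_card_of_injective _ (hg.codRestrict hgD)

theorem veDomNum_eq_one [Finite V] {u v w : V} (huv : G.Adj u v) (hw : IsVeDomSet G {w}) :
    veDomNum G = 1 := by
  refine le_antisymm (by simpa using hw.veDomNum_le) (le_veDomNum fun D hD => ?_)
  obtain ⟨d, hd, -⟩ := hD u v huv
  exact (Set.ncard_pos).2 ⟨d, hd⟩

end Domination

section Spider

open Sum

variable {n : ℕ}

theorem spider_adj_center_middle (i : Fin n) : (spider n).Adj (inl ()) (inr (inl i)) := by
  simp [spider]

theorem spider_adj_middle_leaf (i : Fin n) : (spider n).Adj (inr (inl i)) (inr (inr i)) := by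
  simp [spider]

theorem spider_adj_leaf_iff {i : Fin n} {v : SpiderV n} :
    (spider n).Adj (inr (inr i)) v ↔ v = inr (inl i) := by
  rcases v with ⟨⟩ | j | j <;> simp [spider, eq_comm]

theorem spider_exists_middle_of_adj {u v : SpiderV n} (huv : (spider n).Adj u v) :
    ∃ i, u = inr (inl i) ∨ v = inr (inl i) := by
  simp only [spider, SimpleGraph.fromRel_adj] at huv
  rcases huv with ⟨-, (⟨i, -, rfl⟩ | ⟨i, rfl, -⟩) | (⟨i, -, rfl⟩ | ⟨i, rfl, -⟩)⟩ <;>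
    exact ⟨i, by simp⟩

theorem spider_pairwise_disjoint_closedNbhd_leaf :
    Pairwise (Disjoint on fun i : Fin n => closedNbhd (spider n) {inr (inr i)}) := by
  intro i j hij
  rw [onFun, Set.disjoint_left]
  intro v hvi hvj
  rw [mem_closedNbhd_singleton, spider_adj_leaf_iff] at hvi hvj
  rcases hvi with rfl | rfl <;> simp_all

theorem spider_isDomSet_middle (hn : 0 < n) :
    IsDomSet (spider n) (Set.range fun i => inr (inl i)) := by
  rintro (⟨⟩ | i | i) hv
  · exact ⟨_, ⟨⟨0, hn⟩, rfl⟩, (spider_adj_center_middle _).symm⟩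
  · exact absurd ⟨i, rfl⟩ hv
  · exact ⟨_, ⟨i, rfl⟩, spider_adj_middle_leaf i⟩

theorem spider_isVeDomSet_center : IsVeDomSet (spider n) {inl ()} := by
  intro u v huv
  refine ⟨_, rfl, ?_⟩
  obtain ⟨i, rfl | rfl⟩ := spider_exists_middle_of_adj huv
  · exact Or.inl (mem_closedNbhd_singleton.2 (Or.inr (spider_adj_center_middle i)))
  · exact Or.inr (mem_closedNbhd_singleton.2 (Or.inr (spider_adj_center_middle i)))

theorem spider_domNum (hn : 0 < n) : domNum (spider n) = n := by
  refine le_antisymm ?_ (le_domNum fun D hD => ?_)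
  · have hinj : Injective fun i : Fin n => (inr (inl i) : SpiderV n) :=
      inr_injective.comp inl_injective
    simpa [Set.ncard_range_of_injective hinj] using (spider_isDomSet_middle hn).domNum_le
  · simpa using hD.card_le_ncard_of_pairwiseDisjoint spider_pairwise_disjoint_closedNbhd_leaf

theorem spider_veDomNum (hn : 0 < n) : veDomNum (spider n) = 1 :=
  veDomNum_eq_one (spider_adj_center_middle ⟨0, hn⟩) spider_isVeDomSet_center

end Spider

/-- For the spider graph with `n ≥ 2` legs, `γ(G) = n` while `γ_ve(G) = 1`;
in particular the ratio `γ/γ_ve` tends to infinity as `n → ∞`. -/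
theorem spider_domNum_veDomNum :
    (∀ n : ℕ, 2 ≤ n → domNum (spider n) = n ∧ veDomNum (spider n) = 1) ∧
    Filter.Tendsto
      (fun n : ℕ => (domNum (spider n) : ℝ) / (veDomNum (spider n) : ℝ))
      Filter.atTop Filter.atTop := by
  refine ⟨fun n hn => ⟨spider_domNum (by omega), spider_veDomNum (by omega)⟩,
    tendsto_natCast_atTop_atTop.congr' ?_⟩
  filter_upwards [Filter.eventually_gt_atTop 0] with n hn
  simp [spider_domNum hn, spider_veDomNum hn]
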